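/- Let G be a finitely generated torsion-free 2-step nilpotent group generated by a₁,...,aₙ (n ≥ 2), where each aᵢ is centralizer-small and [aᵢ,aⱼ] ≠ 1 for all i ≠ j. If R is a commutative ring with identity acting faithfully by endomorphisms on G/Z(G) and on G' such that the commutator map G/Z(G) × G/Z(G) → G' is R-bilinear, then R is isomorphic to the ring of integers ℤ. -/

import Mathlib

/-!
Bilinearity applied to `[aᵢ, aᵢ] = 1` shows that `σ r (aᵢ Z)` commutes with `aᵢ`, so by
centralizer-smallness `σ r` acts on `aᵢ Z` as an integer power `tᵢ(r)`. Bilinearity again gives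
`[aᵢ, aⱼ]^{tᵢ(r)} = [aᵢ, aⱼ]^{tⱼ(r)}`, and `[aᵢ, aⱼ]` has infinite order, so all exponents agree.
The common exponent `t` is a ring homomorphism `R → ℤ` (read off on a point `aᵢ Z` of infinite
order), injective because the `aᵢ` generate `G` and `σ` is faithful; its image contains `1`, so it
is an isomorphism.
-/

/-- The commutator `[x,y] = x⁻¹y⁻¹xy`. -/
def grpComm {G : Type*} [Group G] (x y : G) : G := x⁻¹ * y⁻¹ * x * y

open scoped commutatorElement in
lemma grpComm_mem_commutator {G : Type*} [Group G] (g h : G) :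
    grpComm g h ∈ commutator G := by
  have : grpComm g h = ⁅g⁻¹, h⁻¹⁆ := by
    simp [grpComm, commutatorElement_def]
  rw [this, commutator_def]
  exact Subgroup.commutator_mem_commutator (Subgroup.mem_top _) (Subgroup.mem_top _)

/-- `g` is centralizer-small: `C_G(g) = {gᵗz : t ∈ ℤ, z ∈ Z(G)}`. -/
def CSmall {G : Type*} [Group G] (g : G) : Prop :=
  ∀ x : G, x * g = g * x ↔ ∃ (t : ℤ) (z : G), z ∈ Subgroup.center G ∧ x = g ^ t * z

/-- `(R, σ, τ)` is a ring of scalars of `G`: the commutative unital ring `R`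
acts faithfully by endomorphisms (via `σ` on `G/Z(G)` and via `τ` on `G' `),
and the commutator pairing `G/Z(G) × G/Z(G) → G'` is `R`-bilinear. -/
def IsRingOfScalars (G : Type*) [Group G] (R : Type*) [CommRing R]
    (σ : R → G ⧸ Subgroup.center G → G ⧸ Subgroup.center G)
    (τ : R → commutator G → commutator G) : Prop :=
  (∀ r x y, σ r (x * y) = σ r x * σ r y) ∧
  (∀ r s x, σ (r + s) x = σ r x * σ s x) ∧
  (∀ r s x, σ (r * s) x = σ r (σ s x)) ∧
  (∀ x, σ 1 x = x) ∧
  (∀ r s, (∀ x, σ r x = σ s x) → r = s) ∧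
  (∀ r x y, τ r (x * y) = τ r x * τ r y) ∧
  (∀ r s x, τ (r + s) x = τ r x * τ s x) ∧
  (∀ r s x, τ (r * s) x = τ r (τ s x)) ∧
  (∀ x, τ 1 x = x) ∧
  (∀ r s, (∀ x, τ r x = τ s x) → r = s) ∧
  (∀ (r : R) (g g' h : G),
    σ r (g : G ⧸ Subgroup.center G) = (g' : G ⧸ Subgroup.center G) →
    τ r ⟨grpComm g h, grpComm_mem_commutator g h⟩ =
      ⟨grpComm g' h, grpComm_mem_commutator g' h⟩) ∧
  (∀ (r : R) (g h h' : G),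
    σ r (h : G ⧸ Subgroup.center G) = (h' : G ⧸ Subgroup.center G) →
    τ r ⟨grpComm g h, grpComm_mem_commutator g h⟩ =
      ⟨grpComm g h', grpComm_mem_commutator g h'⟩)

section Commutator

variable {G : Type*} [Group G]

lemma grpComm_eq_one_iff {x y : G} : grpComm x y = 1 ↔ x * y = y * x := by
  rw [show grpComm x y = (y * x)⁻¹ * (x * y) by simp [grpComm, mul_assoc], inv_mul_eq_one,
    eq_comm]

lemma grpComm_self (x : G) : grpComm x x = 1 :=
  grpComm_eq_one_iff.mpr rfl

lemma grpComm_inv (x y : G) : (grpComm x y)⁻¹ = grpComm y x := by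
  simp [grpComm, mul_assoc]

lemma grpComm_mem_center_of_grpComm_grpComm_eq_one
    (h2 : ∀ x y z : G, grpComm x (grpComm y z) = 1) (y z : G) :
    grpComm y z ∈ Subgroup.center G :=
  Subgroup.mem_center_iff.mpr fun x => grpComm_eq_one_iff.mp (h2 x y z)

lemma grpComm_zpow_left {a b : G} (hc : grpComm a b ∈ Subgroup.center G) (t : ℤ) :
    grpComm (a ^ t) b = grpComm a b ^ t := by
  have hconj : b⁻¹ * a ^ t * b = (a * grpComm a b) ^ t := by
    rw [show a * grpComm a b = b⁻¹ * a * b by simp [grpComm, mul_assoc]]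
    simpa [MulAut.conj_apply, mul_assoc] using map_zpow (MulAut.conj b⁻¹) a t
  rw [Commute.mul_zpow (Subgroup.mem_center_iff.mp hc a)] at hconj
  calc grpComm (a ^ t) b = (a ^ t)⁻¹ * (b⁻¹ * a ^ t * b) := by simp [grpComm, mul_assoc]
    _ = grpComm a b ^ t := by rw [hconj, inv_mul_cancel_left]

lemma grpComm_zpow_right {a b : G} (hc : grpComm b a ∈ Subgroup.center G) (t : ℤ) :
    grpComm a (b ^ t) = grpComm a b ^ t := by
  rw [← grpComm_inv, grpComm_zpow_left hc, ← inv_zpow, grpComm_inv]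

end Commutator

lemma not_isOfFinOrder_mk_of_grpComm_ne_one {G : Type*} [Group G]
    (htf : ∀ g : G, g ≠ 1 → ¬IsOfFinOrder g) {a b : G}
    (hc : grpComm a b ∈ Subgroup.center G) (hab : grpComm a b ≠ 1) :
    ¬IsOfFinOrder (a : G ⧸ Subgroup.center G) := by
  intro hfin
  obtain ⟨k, hk0, hk⟩ := isOfFinOrder_iff_zpow_eq_one.mp hfin
  rw [← QuotientGroup.mk_zpow, QuotientGroup.eq_one_iff] at hk
  have hcomm : grpComm (a ^ k) b = 1 :=
    grpComm_eq_one_iff.mpr (Subgroup.mem_center_iff.mp hk b).symm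
  rw [grpComm_zpow_left hc] at hcomm
  exact htf _ hab (isOfFinOrder_iff_zpow_eq_one.mpr ⟨k, hk0, hcomm⟩)

namespace IsRingOfScalars

variable {G : Type*} [Group G] {R : Type*} [CommRing R]
  {σ : R → G ⧸ Subgroup.center G → G ⧸ Subgroup.center G} {τ : R → commutator G → commutator G}

def sigmaHom (hR : IsRingOfScalars G R σ τ) (r : R) :
    G ⧸ Subgroup.center G →* G ⧸ Subgroup.center G :=
  MonoidHom.mk' (σ r) (hR.1 r)

lemma sigmaHom_apply (hR : IsRingOfScalars G R σ τ) (r : R) (x : G ⧸ Subgroup.center G) :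
    hR.sigmaHom r x = σ r x :=
  rfl

lemma sigma_add_apply (hR : IsRingOfScalars G R σ τ) (r s : R) (x : G ⧸ Subgroup.center G) :
    σ (r + s) x = σ r x * σ s x :=
  hR.2.1 r s x

lemma sigma_mul_apply (hR : IsRingOfScalars G R σ τ) (r s : R) (x : G ⧸ Subgroup.center G) :
    σ (r * s) x = σ r (σ s x) :=
  hR.2.2.1 r s x

lemma sigma_one_apply (hR : IsRingOfScalars G R σ τ) (x : G ⧸ Subgroup.center G) :
    σ 1 x = x :=
  hR.2.2.2.1 x

lemma sigma_injective (hR : IsRingOfScalars G R σ τ) : Function.Injective σ :=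
  fun r s h => hR.2.2.2.2.1 r s (congrFun h)

lemma sigma_zero_apply (hR : IsRingOfScalars G R σ τ) (x : G ⧸ Subgroup.center G) :
    σ 0 x = 1 := by
  simpa only [add_zero, left_eq_mul] using hR.sigma_add_apply 0 0 x

lemma tau_apply_one (hR : IsRingOfScalars G R σ τ) (r : R) : τ r 1 = 1 :=
  (MonoidHom.mk' (τ r) (hR.2.2.2.2.2.1 r)).map_one

lemma commute_of_sigma_apply_eq (hR : IsRingOfScalars G R σ τ) {r : R} {g h : G}
    (hg : σ r g = h) : h * g = g * h := by
  have hτ₁ := hR.tau_apply_one r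
  obtain ⟨-, -, -, -, -, -, -, -, -, -, hleft, -⟩ := hR
  have hτ := hleft r g h g hg
  have hone : (⟨grpComm g g, grpComm_mem_commutator g g⟩ : commutator G) = 1 :=
    Subtype.ext (grpComm_self g)
  rw [hone, hτ₁] at hτ
  exact grpComm_eq_one_iff.mp (congrArg Subtype.val hτ).symm

lemma exists_sigma_apply_eq_zpow (hR : IsRingOfScalars G R σ τ) {a : G} (ha : CSmall a)
    (r : R) : ∃ t : ℤ, σ r a = (a : G ⧸ Subgroup.center G) ^ t := by
  obtain ⟨g, hg⟩ := QuotientGroup.mk_surjective (σ r a)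
  obtain ⟨t, z, hz, rfl⟩ := (ha g).mp (hR.commute_of_sigma_apply_eq hg.symm)
  refine ⟨t, ?_⟩
  rw [← hg, QuotientGroup.mk_mul, (QuotientGroup.eq_one_iff z).mpr hz, mul_one,
    QuotientGroup.mk_zpow]

/-- Bilinearity gives `[a, b]^s = [a^s, b] = [a, b^u] = [a, b]^u`. -/
lemma exponent_eq_of_grpComm_ne_one (hR : IsRingOfScalars G R σ τ)
    (htf : ∀ g : G, g ≠ 1 → ¬IsOfFinOrder g) {a b : G}
    (hc : ∀ x y : G, grpComm x y ∈ Subgroup.center G) (hab : grpComm a b ≠ 1)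
    {r : R} {s u : ℤ} (ha : σ r a = (a : G ⧸ Subgroup.center G) ^ s)
    (hb : σ r b = (b : G ⧸ Subgroup.center G) ^ u) : s = u := by
  rw [← QuotientGroup.mk_zpow] at ha hb
  obtain ⟨-, -, -, -, -, -, -, -, -, -, hleft, hright⟩ := hR
  have hs := hleft r a (a ^ s) b ha
  have hu := hright r a b (b ^ u) hb
  have hsu : grpComm (a ^ s) b = grpComm a (b ^ u) := congrArg Subtype.val (hs.symm.trans hu)
  rw [grpComm_zpow_left (hc a b), grpComm_zpow_right (hc b a)] at hsu
  exact injective_zpow_iff_not_isOfFinOrder.mpr (htf _ hab) hsu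

lemma exists_forall_sigma_apply_eq_zpow (hR : IsRingOfScalars G R σ τ)
    (htf : ∀ g : G, g ≠ 1 → ¬IsOfFinOrder g) (hc : ∀ x y : G, grpComm x y ∈ Subgroup.center G)
    {ι : Type*} {a : ι → G} (hsmall : ∀ i, CSmall (a i))
    (hne : ∀ i j, i ≠ j → grpComm (a i) (a j) ≠ 1) (i₀ : ι) (r : R) :
    ∃ t : ℤ, ∀ i, σ r (a i) = (a i : G ⧸ Subgroup.center G) ^ t := by
  obtain ⟨t, ht⟩ := hR.exists_sigma_apply_eq_zpow (hsmall i₀) r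
  refine ⟨t, fun i => ?_⟩
  obtain rfl | hi := eq_or_ne i₀ i
  · exact ht
  obtain ⟨u, hu⟩ := hR.exists_sigma_apply_eq_zpow (hsmall i) r
  rwa [hR.exponent_eq_of_grpComm_ne_one htf hc (hne i₀ i hi) ht hu]

lemma eq_of_forall_sigma_apply_eq (hR : IsRingOfScalars G R σ τ) {ι : Type*} {a : ι → G}
    (hgen : Subgroup.closure (Set.range a) = ⊤) {r s : R}
    (h : ∀ i, σ r (a i) = σ s (a i)) : r = s := by
  refine hR.sigma_injective (funext fun x => ?_)
  have hagree : Set.EqOn (hR.sigmaHom r) (hR.sigmaHom s)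
      (QuotientGroup.mk' (Subgroup.center G) '' Set.range a) := by
    rintro _ ⟨_, ⟨i, rfl⟩, rfl⟩
    exact h i
  have htop : Subgroup.closure (QuotientGroup.mk' (Subgroup.center G) '' Set.range a) = ⊤ := by
    rw [← MonoidHom.map_closure, hgen, Subgroup.map_top_of_surjective _
      (QuotientGroup.mk'_surjective _)]
  exact MonoidHom.eqOn_closure hagree (htop ▸ Subgroup.mem_top x)

def toIntRingHom (hR : IsRingOfScalars G R σ τ) {x : G ⧸ Subgroup.center G}
    (hx : ¬IsOfFinOrder x) {t : R → ℤ} (ht : ∀ r, σ r x = x ^ t r) : R →+* ℤ where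
  toFun := t
  map_one' := injective_zpow_iff_not_isOfFinOrder.mpr hx <| by
    simp only [← ht, hR.sigma_one_apply, zpow_one]
  map_mul' r s := injective_zpow_iff_not_isOfFinOrder.mpr hx <|
    show x ^ t (r * s) = x ^ (t r * t s) by
      rw [← ht, hR.sigma_mul_apply, ht s, ← hR.sigmaHom_apply, map_zpow, hR.sigmaHom_apply, ht,
        zpow_mul]
  map_zero' := injective_zpow_iff_not_isOfFinOrder.mpr hx <| by
    simp only [← ht, hR.sigma_zero_apply, zpow_zero]
  map_add' r s := injective_zpow_iff_not_isOfFinOrder.mpr hx <| by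
    simp only [← ht, hR.sigma_add_apply, zpow_add]

end IsRingOfScalars

theorem stmt_8_general (G : Type*) [Group G]
    (htf : ∀ g : G, g ≠ 1 → ¬IsOfFinOrder g)
    (h2 : ∀ x y z : G, grpComm x (grpComm y z) = 1)
    (n : ℕ) (hn : 2 ≤ n) (a : Fin n → G)
    (hgen : Subgroup.closure (Set.range a) = ⊤)
    (hsmall : ∀ i, CSmall (a i))
    (hne : ∀ i j, i ≠ j → grpComm (a i) (a j) ≠ 1)
    (R : Type*) [CommRing R]
    (σ : R → G ⧸ Subgroup.center G → G ⧸ Subgroup.center G)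
    (τ : R → commutator G → commutator G)
    (hR : IsRingOfScalars G R σ τ) :
    Nonempty (R ≃+* ℤ) := by
  have hc := grpComm_mem_center_of_grpComm_grpComm_eq_one h2
  let i₀ : Fin n := ⟨0, by omega⟩
  let i₁ : Fin n := ⟨1, by omega⟩
  choose t ht using hR.exists_forall_sigma_apply_eq_zpow htf hc hsmall hne i₀
  have hx := not_isOfFinOrder_mk_of_grpComm_ne_one htf (hc _ _)
    (hne i₀ i₁ (by simp [i₀, i₁, Fin.ext_iff]))
  let φ := hR.toIntRingHom hx fun r => ht r i₀
  have hφ : Function.Injective φ := fun r s hrs =>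
    hR.eq_of_forall_sigma_apply_eq hgen fun i => by rw [ht r i, ht s i]; exact congrArg _ hrs
  exact ⟨RingEquiv.ofBijective φ ⟨hφ, fun m => ⟨m, map_intCast φ m⟩⟩⟩

/-- If a f.g. torsion-free 2-step nilpotent group `G` is generated by `n ≥ 2`
pairwise non-commuting centralizer-small elements, then every ring of scalars
of `G` is isomorphic to `ℤ`. -/
theorem stmt_8 (G : Type*) [Group G] [Group.FG G]
    (htf : ∀ g : G, g ≠ 1 → ¬IsOfFinOrder g)
    (h2 : ∀ x y z : G, grpComm x (grpComm y z) = 1)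
    (n : ℕ) (hn : 2 ≤ n) (a : Fin n → G)
    (hgen : Subgroup.closure (Set.range a) = ⊤)
    (hsmall : ∀ i, CSmall (a i))
    (hne : ∀ i j, i ≠ j → grpComm (a i) (a j) ≠ 1)
    (R : Type*) [CommRing R]
    (σ : R → G ⧸ Subgroup.center G → G ⧸ Subgroup.center G)
    (τ : R → commutator G → commutator G)
    (hR : IsRingOfScalars G R σ τ) :
    Nonempty (R ≃+* ℤ) :=
  stmt_8_general G htf h2 n hn a hgen hsmall hne R σ τ hR
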